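/- For any prime p > 3, the rational number ∑_{k=0}^{p-1} (1 + 2^{−k})·u_k(2,2)·H_k is congruent to 0 modulo p. -/

import Mathlib

/-!
Put `α = 1 + i` and `β = 1 - i`, so that `2i·u_k = α^k - β^k` and
`2^{-k}·2i·u_k = (α/2)^k - (β/2)^k`. Over `𝔽_p[i]` the sum is thus a signed combination of
`G(x) = ∑_{k<p} H_k x^k` at `α, β, α/2, β/2`. Since `H_{p-1} ≡ 0`, summation by parts gives
`(1 - x) G(x) ≡ ∑_{0<j<p} x^j / j`, which is the reduction of the integral polynomial
`(1 - x^p - (1 - x)^p) / p`, and `1 - x` is a unit at each of the four points. Lifting to `ℤ[i]`,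
`-2^{p+1}·i` times the sum becomes a Gaussian integer `Z` with `2pZ = i s (s - 2)^2` for
`s = α^p + β^p` (this uses `s^2 = 2^{p+1}`), and `s ≡ 2 (mod p)`; hence `p ∣ 2Z` and the sum
vanishes mod `p`.
-/

/-- The Lucas sequence `u_n(A,B)`. -/
def lucasU (A B : ℤ) : ℕ → ℤ
  | 0 => 0
  | 1 => 1
  | n + 2 => A * lucasU A B (n + 1) - B * lucasU A B n

/-- `x ≡ y (mod p^m)` for rational numbers: `x - y = p^m * r` with `p ∤ den r`. -/
def ratCong (p m : ℕ) (x y : ℚ) : Prop :=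
  ∃ r : ℚ, x - y = (p : ℚ) ^ m * r ∧ ¬ (p ∣ r.den)

open Finset

theorem sub_mul_lucasU {R : Type*} [CommRing R] {A B : ℤ} {a b : R} (hsum : a + b = A)
    (hprod : a * b = B) (n : ℕ) : (a - b) * lucasU A B n = a ^ n - b ^ n := by
  induction n using Nat.twoStepInduction with
  | zero => simp [lucasU]
  | one => simp [lucasU]
  | more n ih ih' =>
    simp only [lucasU, Int.cast_sub, Int.cast_mul]
    linear_combination (A : R) * ih' - (B : R) * ih - (a ^ (n + 1) - b ^ (n + 1)) * hsum
      + (a ^ n - b ^ n) * hprod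

section BinomialQuotient

variable {R S : Type*} [CommRing R] [CommRing S] (p : ℕ)

def binomialQuotient (x y : R) : R :=
  ∑ j ∈ Ioo 0 p, ((p.choose j / p : ℕ) : R) * x ^ j * y ^ (p - j)

theorem map_binomialQuotient (f : R →+* S) (x y : R) :
    f (binomialQuotient p x y) = binomialQuotient p (f x) (f y) := by
  simp [binomialQuotient, map_sum]

theorem binomialQuotient_mul_mul (c x y : R) :
    binomialQuotient p (c * x) (c * y) = c ^ p * binomialQuotient p x y := by
  rw [binomialQuotient, binomialQuotient, mul_sum]
  refine sum_congr rfl fun j hj => ?_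
  obtain ⟨k, rfl⟩ := Nat.exists_eq_add_of_lt (mem_Ioo.mp hj).2
  rw [show j + k + 1 - j = k + 1 by omega]
  ring

theorem natCast_mul_binomialQuotient (hp : p.Prime) (x y : R) :
    (p : R) * binomialQuotient p x y = (x + y) ^ p - x ^ p - y ^ p := by
  have hsplit :
      (x + y) ^ p = y ^ p + ∑ j ∈ Ioo 0 p, x ^ j * y ^ (p - j) * p.choose j + x ^ p := by
    rw [add_pow, sum_range_succ, range_eq_Ico, sum_eq_sum_Ico_succ_bot hp.pos, zero_add,
      show Ico 1 p = Ioo 0 p from rfl]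
    simp
  rw [hsplit, binomialQuotient, mul_sum]
  have hterm : ∀ j ∈ Ioo 0 p,
      (p : R) * (((p.choose j / p : ℕ) : R) * x ^ j * y ^ (p - j)) =
        x ^ j * y ^ (p - j) * p.choose j := by
    intro j hj
    obtain ⟨hj0, hjp⟩ := mem_Ioo.mp hj
    obtain ⟨c, hc⟩ := hp.dvd_choose_self hj0.ne' hjp
    rw [hc, Nat.mul_div_cancel_left c hp.pos]
    push_cast
    ring
  rw [sum_congr rfl hterm]
  ring

end BinomialQuotient

section ZModPrime

variable {p : ℕ} [Fact p.Prime]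

theorem ZMod.two_ne_zero_of_ne_two (hp2 : p ≠ 2) : (2 : ZMod p) ≠ 0 :=
  Ring.two_ne_zero (by rwa [ZMod.ringChar_zmod_n])

theorem ZMod.natCast_ne_zero_of_pos_of_lt {j : ℕ} (hj0 : 0 < j) (hjp : j < p) :
    (j : ZMod p) ≠ 0 := by
  rw [Ne, ZMod.natCast_eq_zero_iff]
  exact Nat.not_dvd_of_pos_of_lt hj0 hjp

theorem ZMod.natCast_choose_sub_one {j : ℕ} (hj : j < p) :
    (((p - 1).choose j : ℕ) : ZMod p) = (-1) ^ j := by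
  induction j with
  | zero => simp
  | succ j ih =>
    have hreflect : ((p - 1 - j : ℕ) : ZMod p) = -((j + 1 : ℕ) : ZMod p) := by
      rw [eq_neg_iff_add_eq_zero, ← Nat.cast_add, show p - 1 - j + (j + 1) = p by omega,
        ZMod.natCast_self]
    apply mul_right_cancel₀ (ZMod.natCast_ne_zero_of_pos_of_lt j.succ_pos hj)
    rw [← Nat.cast_mul, Nat.choose_succ_right_eq, Nat.cast_mul, ih (by omega), hreflect]
    ring

theorem ZMod.natCast_choose_div_self {j : ℕ} (hj0 : 0 < j) (hjp : j < p) :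
    ((p.choose j / p : ℕ) : ZMod p) = -(-1) ^ j * (j : ZMod p)⁻¹ := by
  obtain ⟨k, rfl⟩ : ∃ k, j = k + 1 := ⟨j - 1, by omega⟩
  obtain ⟨c, hc⟩ := (Fact.out : p.Prime).dvd_choose_self hj0.ne' hjp
  have hpk : p * (p - 1).choose k = p * (c * (k + 1)) := by
    have := Nat.add_one_mul_choose_eq (p - 1) k
    rwa [Nat.sub_add_cancel (Fact.out : p.Prime).pos, hc, mul_assoc] at this
  have hck : ((c : ℕ) : ZMod p) * ((k + 1 : ℕ) : ZMod p) = (-1) ^ k := by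
    rw [← Nat.cast_mul, ← Nat.eq_of_mul_eq_mul_left (Fact.out : p.Prime).pos hpk,
      ZMod.natCast_choose_sub_one (by omega)]
  rw [hc, Nat.mul_div_cancel_left c (Fact.out : p.Prime).pos,
    eq_mul_inv_iff_mul_eq₀ (ZMod.natCast_ne_zero_of_pos_of_lt hj0 hjp), hck]
  ring

theorem binomialQuotient_neg_left_one {A : Type*} [CommRing A] [Algebra (ZMod p) A] (x : A) :
    binomialQuotient p (-x) 1 =
      -∑ j ∈ Ioo 0 p, algebraMap (ZMod p) A (j : ZMod p)⁻¹ * x ^ j := by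
  rw [binomialQuotient, ← sum_neg_distrib]
  refine sum_congr rfl fun j hj => ?_
  obtain ⟨hj0, hjp⟩ := mem_Ioo.mp hj
  have hsign : ((-1) ^ j * (-1) ^ j : A) = 1 := by rw [← mul_pow]; simp
  rw [← map_natCast (algebraMap (ZMod p) A), ZMod.natCast_choose_div_self hj0 hjp, neg_pow]
  simp only [map_mul, map_neg, map_pow, map_one, one_pow, mul_one]
  linear_combination (-(algebraMap (ZMod p) A (j : ZMod p)⁻¹ * x ^ j)) * hsign

end ZModPrime

section HarmonicMod

def harmonicMod (p k : ℕ) : ZMod p :=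
  ∑ i ∈ range k, ((i + 1 : ℕ) : ZMod p)⁻¹

variable {p : ℕ} [Fact p.Prime]

theorem harmonicMod_self (hp2 : p ≠ 2) : harmonicMod p p = 0 := by
  set f : ℕ → ZMod p := fun n => (n : ZMod p)⁻¹
  have hshift : harmonicMod p p = ∑ j ∈ range p, f j := by
    have h := sum_range_succ' f p
    rw [sum_range_succ] at h
    simpa [f, harmonicMod] using h.symm
  have hreflect : harmonicMod p p = -∑ j ∈ range p, f j := by
    rw [harmonicMod, ← sum_range_reflect, ← sum_neg_distrib]
    refine sum_congr rfl fun j hj => ?_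
    have hjp := mem_range.mp hj
    rw [show p - 1 - j + 1 = p - j by omega, Nat.cast_sub hjp.le, ZMod.natCast_self, zero_sub,
      inv_neg]
  have : (2 : ZMod p) * harmonicMod p p = 0 := by
    linear_combination hshift + hreflect
  exact (mul_eq_zero.mp this).resolve_left (ZMod.two_ne_zero_of_ne_two hp2)

end HarmonicMod

theorem one_sub_mul_sum_pow_mul_sum_range {R : Type*} [CommRing R] (c : ℕ → R) (x : R)
    (n : ℕ) :
    (1 - x) * ∑ k ∈ range n, x ^ k * ∑ j ∈ range k, c j =
      ∑ j ∈ range n, c j * (x ^ (j + 1) - x ^ n) := by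
  induction n with
  | zero => simp
  | succ n ih =>
    rw [sum_range_succ, mul_add, ih, sum_range_succ, sub_self, mul_zero, add_zero, mul_sum,
      mul_sum, ← sum_add_distrib]
    exact sum_congr rfl fun j _ => by ring

section Algebra

variable {p : ℕ} [Fact p.Prime] {A : Type*} [CommRing A] [Algebra (ZMod p) A]

theorem one_sub_mul_sum_pow_mul_harmonicMod (hp2 : p ≠ 2) (x : A) :
    (1 - x) * ∑ k ∈ range p, x ^ k * algebraMap (ZMod p) A (harmonicMod p k) =
      -binomialQuotient p (-x) 1 := by
  simp only [harmonicMod, map_sum]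
  rw [one_sub_mul_sum_pow_mul_sum_range, binomialQuotient_neg_left_one, neg_neg]
  simp only [mul_sub, sum_sub_distrib, ← sum_mul, ← map_sum]
  rw [← harmonicMod, harmonicMod_self hp2, map_zero, zero_mul, sub_zero, range_eq_Ico,
    sum_Ico_add' (fun j : ℕ => algebraMap (ZMod p) A (j : ZMod p)⁻¹ * x ^ j),
    sum_Ico_succ_top (Fact.out : p.Prime).one_lt.le, ZMod.natCast_self, inv_zero, map_zero,
    zero_mul, add_zero, show Ico 1 p = Ioo 0 p from rfl]

theorem sum_pow_mul_harmonicMod_of_mul_one_sub (hp2 : p ≠ 2) {c x : A} (hc : c * (1 - x) = 1) :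
    ∑ k ∈ range p, x ^ k * algebraMap (ZMod p) A (harmonicMod p k) =
      -(c * binomialQuotient p (-x) 1) := by
  have h := congrArg (c * ·) (one_sub_mul_sum_pow_mul_harmonicMod hp2 x)
  rwa [← mul_assoc, hc, one_mul, mul_neg] at h

end Algebra

def lucasHarmonicSum (p : ℕ) : ZMod p :=
  ∑ k ∈ range p, (1 + 2⁻¹ ^ k) * (lucasU 2 2 k : ZMod p) * harmonicMod p k

/-- The Gaussian integer `Z` of the proof sketch when `i = √-1`. -/
def lucasHarmonicLift (p : ℕ) {R : Type*} [CommRing R] (i : R) : R :=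
  2 ^ p * i * (binomialQuotient p (-(1 + i)) 1 + binomialQuotient p (-(1 - i)) 1) +
    (1 + i) * binomialQuotient p (-(1 + i)) 2 - (1 - i) * binomialQuotient p (-(1 - i)) 2

theorem algebraMap_lucasHarmonicSum_mul {p : ℕ} [Fact p.Prime] (hp2 : p ≠ 2) {A : Type*}
    [CommRing A] [Algebra (ZMod p) A] {i : A} (hi : i * i = -1) :
    algebraMap (ZMod p) A (lucasHarmonicSum p) * (2 ^ (p + 1) * i) = -lucasHarmonicLift p i := by
  set ψ := algebraMap (ZMod p) A
  have hw : 2 * ψ 2⁻¹ = 1 := by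
    rw [← map_ofNat ψ 2, ← map_mul, mul_inv_cancel₀ (ZMod.two_ne_zero_of_ne_two hp2),
      map_one]
  set w := ψ 2⁻¹
  set G : A → A := fun x => ∑ k ∈ range p, x ^ k * ψ (harmonicMod p k)
  have hbinet (k : ℕ) : 2 * i * (lucasU 2 2 k : A) = (1 + i) ^ k - (1 - i) ^ k := by
    rw [← sub_mul_lucasU (A := 2) (B := 2) (by push_cast; ring)
      (by push_cast; linear_combination -hi)]
    ring
  have hsum : ψ (lucasHarmonicSum p) * (2 * i) =
      G (1 + i) - G (1 - i) + G (w * (1 + i)) - G (w * (1 - i)) := by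
    simp only [lucasHarmonicSum, map_sum, map_mul, map_add, map_pow, map_one, map_intCast,
      sum_mul, G, ← sum_sub_distrib, ← sum_add_distrib]
    refine sum_congr rfl fun k _ => ?_
    rw [mul_pow, mul_pow]
    linear_combination (1 + w ^ k) * ψ (harmonicMod p k) * hbinet k
  have hα := sum_pow_mul_harmonicMod_of_mul_one_sub hp2 (c := i) (x := 1 + i)
    (by linear_combination -hi)
  have hβ := sum_pow_mul_harmonicMod_of_mul_one_sub hp2 (c := -i) (x := 1 - i)
    (by linear_combination -hi)
  have hwα := sum_pow_mul_harmonicMod_of_mul_one_sub hp2 (c := 1 + i) (x := w * (1 + i))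
    (by linear_combination -i * hw - w * hi)
  have hwβ := sum_pow_mul_harmonicMod_of_mul_one_sub hp2 (c := 1 - i) (x := w * (1 - i))
    (by linear_combination i * hw - w * hi)
  have hscale (z : A) : binomialQuotient p (-(w * z)) 1 = w ^ p * binomialQuotient p (-z) 2 := by
    rw [← binomialQuotient_mul_mul, mul_neg, mul_comm w 2, hw]
  rw [hscale] at hwα hwβ
  have hwp : 2 ^ p * w ^ p = 1 := by rw [← mul_pow, hw, one_pow]
  simp only [G] at hsum
  rw [hα, hβ, hwα, hwβ] at hsum
  unfold lucasHarmonicLift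
  linear_combination 2 ^ p * hsum -
    ((1 + i) * binomialQuotient p (-(1 + i)) 2 - (1 - i) * binomialQuotient p (-(1 - i)) 2) * hwp

section Lift

variable {p : ℕ} {R : Type*} [CommRing R] {i : R}

theorem natCast_mul_binomialQuotient_add_binomialQuotient (hp : p.Prime) (hp2 : p ≠ 2) :
    (p : R) * (binomialQuotient p (-(1 + i)) 1 + binomialQuotient p (-(1 - i)) 1) =
      (1 + i) ^ p + (1 - i) ^ p - 2 := by
  have hodd := hp.odd_of_ne_two hp2
  rw [mul_add, natCast_mul_binomialQuotient p hp, natCast_mul_binomialQuotient p hp,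
    show -(1 + i) + 1 = -i by ring, show -(1 - i) + 1 = i by ring, hodd.neg_pow, hodd.neg_pow,
    hodd.neg_pow]
  ring

theorem one_add_pow_add_one_sub_pow_sq (hodd : Odd p) (hi : i * i = -1) :
    ((1 + i) ^ p + (1 - i) ^ p) ^ 2 = 2 ^ (p + 1) := by
  have hα : (1 + i) ^ 2 = 2 * i := by linear_combination hi
  have hβ : (1 - i) ^ 2 = -(2 * i) := by linear_combination hi
  have hαβ : (1 + i) * (1 - i) = 2 := by linear_combination -hi
  calc ((1 + i) ^ p + (1 - i) ^ p) ^ 2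
      = ((1 + i) ^ 2) ^ p + 2 * ((1 + i) * (1 - i)) ^ p + ((1 - i) ^ 2) ^ p := by
        rw [← pow_mul, ← pow_mul, mul_pow]; ring
    _ = 2 ^ (p + 1) := by rw [hα, hβ, hαβ, hodd.neg_pow]; ring

theorem two_mul_natCast_mul_lucasHarmonicLift (hp : p.Prime) (hp2 : p ≠ 2) (hi : i * i = -1) :
    2 * p * lucasHarmonicLift p i =
      i * ((1 + i) ^ p + (1 - i) ^ p) * ((1 + i) ^ p + (1 - i) ^ p - 2) ^ 2 := by
  have hodd := hp.odd_of_ne_two hp2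
  have h1 := natCast_mul_binomialQuotient_add_binomialQuotient (i := i) hp hp2
  have h2 := natCast_mul_binomialQuotient p hp (-(1 + i)) 2
  have h3 := natCast_mul_binomialQuotient p hp (-(1 - i)) 2
  rw [show -(1 + i) + 2 = 1 - i by ring, hodd.neg_pow] at h2
  rw [show -(1 - i) + 2 = 1 + i by ring, hodd.neg_pow] at h3
  have hs := one_add_pow_add_one_sub_pow_sq hodd hi
  unfold lucasHarmonicLift
  linear_combination 2 * 2 ^ p * i * h1 + 2 * (1 + i) * h2 - 2 * (1 - i) * h3 -
    i * ((1 + i) ^ p + (1 - i) ^ p - 4) * hs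

end Lift

theorem GaussianInt.natCast_dvd_two_mul_lucasHarmonicLift {p : ℕ} (hp : p.Prime) (hp2 : p ≠ 2) :
    (p : GaussianInt) ∣ 2 * lucasHarmonicLift p Zsqrtd.sqrtd := by
  have hi : (Zsqrtd.sqrtd : GaussianInt) * Zsqrtd.sqrtd = -1 := by simp
  set s : GaussianInt := (1 + Zsqrtd.sqrtd) ^ p + (1 - Zsqrtd.sqrtd) ^ p
  set t : GaussianInt :=
    binomialQuotient p (-(1 + Zsqrtd.sqrtd)) 1 + binomialQuotient p (-(1 - Zsqrtd.sqrtd)) 1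
  have ht : (p : GaussianInt) * t = s - 2 :=
    natCast_mul_binomialQuotient_add_binomialQuotient hp hp2
  have hp0 : (p : GaussianInt) ≠ 0 := by exact_mod_cast hp.ne_zero
  refine ⟨Zsqrtd.sqrtd * s * t ^ 2, mul_left_cancel₀ hp0 ?_⟩
  linear_combination two_mul_natCast_mul_lucasHarmonicLift hp hp2 hi -
    Zsqrtd.sqrtd * s * (s - 2 + (p : GaussianInt) * t) * ht

open QuadraticAlgebra in
theorem lucasHarmonicSum_eq_zero {p : ℕ} [Fact p.Prime] (hp2 : p ≠ 2) :
    lucasHarmonicSum p = 0 := by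
  let A := QuadraticAlgebra (ZMod p) (-1) 0
  have hω : (ω : A) * ω = -1 := by ext <;> simp [omega_mul_omega_eq_mk]
  let φ : GaussianInt →+* A := Zsqrtd.lift ⟨ω, by simpa using hω⟩
  have hφ : φ Zsqrtd.sqrtd = ω := by simp [φ]
  have hlift : φ (lucasHarmonicLift p Zsqrtd.sqrtd) = lucasHarmonicLift p (ω : A) := by
    simp only [lucasHarmonicLift, map_sub, map_add, map_mul, map_pow, map_neg, map_one, map_ofNat,
      map_binomialQuotient, hφ]
  obtain ⟨c, hc⟩ := GaussianInt.natCast_dvd_two_mul_lucasHarmonicLift (Fact.out : p.Prime) hp2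
  have hp0 : (p : A) = 0 := by
    rw [← map_natCast (algebraMap (ZMod p) A), ZMod.natCast_self, map_zero]
  have h2L : 2 * lucasHarmonicLift p (ω : A) = 0 := by
    have h := congrArg φ hc
    rwa [map_mul, map_mul, map_ofNat, hlift, map_natCast, hp0, zero_mul] at h
  have hsum := algebraMap_lucasHarmonicSum_mul hp2 hω
  have hT : algebraMap (ZMod p) A (lucasHarmonicSum p * 2 ^ (p + 2)) = 0 := by
    rw [map_mul, map_pow, map_ofNat]
    linear_combination (-2 * ω) * hsum + ω * h2L
      + algebraMap (ZMod p) A (lucasHarmonicSum p) * 2 ^ (p + 2) * hω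
  rw [map_eq_zero_iff _ (algebraMap (ZMod p) A).injective] at hT
  exact (mul_eq_zero.mp hT).resolve_right (pow_ne_zero _ (ZMod.two_ne_zero_of_ne_two hp2))

namespace Rat

variable (K : Type*) [DivisionRing K]

/-- `Rat.cast : ℚ → K` is a ring homomorphism on this subring
(`Rat.cast_add_of_ne_zero`, `Rat.cast_mul_of_ne_zero`). -/
def denNeZeroSubring : Subring ℚ where
  carrier := {q | (q.den : K) ≠ 0}
  mul_mem' {q r} hq hr := by
    obtain ⟨c, hc⟩ := mul_den_dvd q r
    refine fun h => mul_ne_zero hq hr ?_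
    rw [← Nat.cast_mul, hc, Nat.cast_mul, h, zero_mul]
  one_mem' := by simp
  add_mem' {q r} hq hr := by
    obtain ⟨c, hc⟩ := add_den_dvd q r
    refine fun h => mul_ne_zero hq hr ?_
    rw [← Nat.cast_mul, hc, Nat.cast_mul, h, zero_mul]
  zero_mem' := by simp
  neg_mem' := by simp

variable {K}

theorem mem_denNeZeroSubring {q : ℚ} : q ∈ denNeZeroSubring K ↔ (q.den : K) ≠ 0 := Iff.rfl

theorem inv_natCast_mem_denNeZeroSubring {n : ℕ} (hn : (n : K) ≠ 0) :
    (n : ℚ)⁻¹ ∈ denNeZeroSubring K := by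
  rw [mem_denNeZeroSubring, inv_natCast_den]
  split_ifs <;> simp [hn]

theorem cast_sum_of_mem {ι : Type*} (s : Finset ι) {f : ι → ℚ}
    (hf : ∀ i ∈ s, f i ∈ denNeZeroSubring K) :
    ((∑ i ∈ s, f i : ℚ) : K) = ∑ i ∈ s, (f i : K) := by
  induction s using Finset.cons_induction with
  | empty => simp
  | cons a s ha ih =>
    have hs : ∀ i ∈ s, f i ∈ denNeZeroSubring K := fun i hi => hf i (mem_cons_of_mem hi)
    rw [sum_cons, sum_cons, cast_add_of_ne_zero (hf a (mem_cons_self a s)) (sum_mem hs), ih hs]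

end Rat

section Reduction

variable {p : ℕ} [Fact p.Prime]

theorem harmonic_mem_and_cast_eq_harmonicMod {k : ℕ} (hk : k < p) :
    harmonic k ∈ Rat.denNeZeroSubring (ZMod p) ∧ (harmonic k : ZMod p) = harmonicMod p k := by
  have hmem : ∀ j ∈ range k, ((j + 1 : ℕ) : ℚ)⁻¹ ∈ Rat.denNeZeroSubring (ZMod p) :=
    fun j hj => Rat.inv_natCast_mem_denNeZeroSubring
      (ZMod.natCast_ne_zero_of_pos_of_lt j.succ_pos (by grind))
  refine ⟨sum_mem hmem, ?_⟩
  rw [harmonic, Rat.cast_sum_of_mem _ hmem, harmonicMod]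
  exact sum_congr rfl fun j _ => Rat.cast_inv_nat _

theorem ratCong_one_zero_of_cast_eq_zero {x : ℚ} (hx : x ∈ Rat.denNeZeroSubring (ZMod p))
    (hx0 : (x : ZMod p) = 0) : ratCong p 1 x 0 := by
  rw [Rat.cast_def, div_eq_zero_iff, or_iff_left hx, ZMod.intCast_zmod_eq_zero_iff_dvd] at hx0
  obtain ⟨a, ha⟩ := hx0
  refine ⟨(a : ℚ) / x.den, ?_, fun hdvd => hx ?_⟩
  · nth_rewrite 1 [← Rat.num_div_den x]
    rw [ha]
    push_cast
    ring
  · have hden := Rat.den_dvd a x.den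
    rw [Rat.divInt_eq_div] at hden
    push_cast at hden
    rw [ZMod.natCast_eq_zero_iff]
    exact Int.natCast_dvd_natCast.mp ((Int.natCast_dvd_natCast.mpr hdvd).trans hden)

theorem lucasHarmonicTerm_mem_and_cast (hp2 : p ≠ 2) {k : ℕ} (hk : k < p) :
    (1 + (2 : ℚ) ^ (-(k : ℤ))) * (lucasU 2 2 k : ℚ) * harmonic k ∈
        Rat.denNeZeroSubring (ZMod p) ∧
      (((1 + (2 : ℚ) ^ (-(k : ℤ))) * (lucasU 2 2 k : ℚ) * harmonic k : ℚ) : ZMod p) =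
        (1 + 2⁻¹ ^ k) * (lucasU 2 2 k : ZMod p) * harmonicMod p k := by
  have htwo : (2 : ℚ)⁻¹ ∈ Rat.denNeZeroSubring (ZMod p) := by
    exact_mod_cast Rat.inv_natCast_mem_denNeZeroSubring (K := ZMod p)
      (ZMod.two_ne_zero_of_ne_two hp2)
  have h2inv : (((2 : ℚ)⁻¹ : ℚ) : ZMod p) = 2⁻¹ := Rat.cast_inv_nat 2
  have hone := one_mem (Rat.denNeZeroSubring (ZMod p))
  have hfactor := add_mem hone (pow_mem htwo k)
  have hu : (lucasU 2 2 k : ℚ) ∈ Rat.denNeZeroSubring (ZMod p) := intCast_mem _ _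
  obtain ⟨hH, hHcast⟩ := harmonic_mem_and_cast_eq_harmonicMod hk
  rw [zpow_neg, zpow_natCast, ← inv_pow]
  refine ⟨mul_mem (mul_mem hfactor hu) hH, ?_⟩
  rw [Rat.cast_mul_of_ne_zero (mul_mem hfactor hu) hH, Rat.cast_mul_of_ne_zero hfactor hu,
    Rat.cast_add_of_ne_zero hone (pow_mem htwo k), Rat.cast_pow, Rat.cast_one, Rat.cast_intCast,
    hHcast, h2inv]

end Reduction

theorem stmt10 (p : ℕ) (hp : p.Prime) (hp3 : 3 < p) :
    ratCong p 1
      (∑ k ∈ Finset.range p,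
        (1 + (2 : ℚ) ^ (-(k : ℤ))) * (lucasU 2 2 k : ℚ) * harmonic k) 0 := by
  have := Fact.mk hp
  have hp2 : p ≠ 2 := by omega
  have hterm (k : ℕ) (hk : k ∈ range p) := lucasHarmonicTerm_mem_and_cast hp2 (mem_range.mp hk)
  apply ratCong_one_zero_of_cast_eq_zero (sum_mem fun k hk => (hterm k hk).1)
  rw [Rat.cast_sum_of_mem _ fun k hk => (hterm k hk).1, ← lucasHarmonicSum_eq_zero hp2]
  exact sum_congr rfl fun k hk => (hterm k hk).2
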